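/- Let H and H' be functional units for ℕ with H ≤ H'. If H' is computable, then H is computable. -/

import Mathlib

/-- Primitive instructions: plain basic `f.m`, positive test `+f.m`, negative test `-f.m`
(method names are natural numbers, there is a single focus `f`), forward jump `#l`,
backward jump `\l`, and the positive/negative termination instructions `!t` / `!f`. -/
inductive Instr : Type where
  | basic (m : ℕ)
  | postest (m : ℕ)
  | negtest (m : ℕ)
  | fjump (l : ℕ)
  | bjump (l : ℕ)
  | haltT
  | haltF
deriving DecidableEq

/-- A functional unit for a state space `S`: a finite, functional set of
(method name, method operation) pairs, where a method operation is a total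
function `S → Bool × S`. -/
structure FU (S : Type*) where
  carrier : Set (ℕ × (S → Bool × S))
  finite : carrier.Finite
  functional : ∀ {m : ℕ} {M M' : S → Bool × S},
    (m, M) ∈ carrier → (m, M') ∈ carrier → M = M'

/-- The interface of a functional unit: the set of method names occurring in it. -/
def FU.iface {S : Type*} (H : FU S) : Set ℕ := {m | ∃ M, (m, M) ∈ H.carrier}

/-- The method operation named `m` in `H` (an arbitrary fixed value if `m ∉ I(H)`). -/
noncomputable def FU.op {S : Type*} (H : FU S) (m : ℕ) (s : S) : Bool × S :=
  letI := Classical.propDecidable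
  if h : ∃ M, (m, M) ∈ H.carrier then h.choose s else (true, s)

/-- The restriction `⟨I, H⟩` of a functional unit to a set `I` of method names. -/
def FU.restrict {S : Type*} (H : FU S) (I : Set ℕ) : FU S where
  carrier := {p ∈ H.carrier | p.1 ∈ I}
  finite := H.finite.subset (Set.sep_subset _ _)
  functional := fun hM hM' => H.functional hM.1 hM'.1

/-- The method names used by an instruction all belong to `I`. -/
def Instr.namesIn (I : Set ℕ) : Instr → Prop
  | .basic m => m ∈ I
  | .postest m => m ∈ I
  | .negtest m => m ∈ I
  | _ => True

/-- An instruction sequence over a set `I` of method names: a finite nonempty list of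
primitive instructions whose method names belong to `I`. -/
def InstrSeqOver (I : Set ℕ) (x : List Instr) : Prop :=
  x ≠ [] ∧ ∀ u ∈ x, u.namesIn I

/-- `Exec H x i s b s'` : execution of the instruction sequence `x` on the functional
unit `H`, from (0-based) position `i` in state `s`, terminates delivering the Boolean
value `b` with final state `s'`.  (Position `i` here corresponds to the 1-based
position `i+1`; positions outside the sequence, jumps `#0`/`\0`, and infinite
executions admit no derivation, i.e. execution does not terminate.) -/
inductive Exec {S : Type*} (H : FU S) (x : List Instr) : ℕ → S → Bool → S → Prop where
  | basic {i : ℕ} {s : S} {b : Bool} {s' : S} (m : ℕ)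
      (hu : x[i]? = some (Instr.basic m))
      (h : Exec H x (i + 1) (H.op m s).2 b s') : Exec H x i s b s'
  | posT {i : ℕ} {s : S} {b : Bool} {s' : S} (m : ℕ)
      (hu : x[i]? = some (Instr.postest m)) (hr : (H.op m s).1 = true)
      (h : Exec H x (i + 1) (H.op m s).2 b s') : Exec H x i s b s'
  | posF {i : ℕ} {s : S} {b : Bool} {s' : S} (m : ℕ)
      (hu : x[i]? = some (Instr.postest m)) (hr : (H.op m s).1 = false)
      (h : Exec H x (i + 2) (H.op m s).2 b s') : Exec H x i s b s'
  | negT {i : ℕ} {s : S} {b : Bool} {s' : S} (m : ℕ)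
      (hu : x[i]? = some (Instr.negtest m)) (hr : (H.op m s).1 = true)
      (h : Exec H x (i + 2) (H.op m s).2 b s') : Exec H x i s b s'
  | negF {i : ℕ} {s : S} {b : Bool} {s' : S} (m : ℕ)
      (hu : x[i]? = some (Instr.negtest m)) (hr : (H.op m s).1 = false)
      (h : Exec H x (i + 1) (H.op m s).2 b s') : Exec H x i s b s'
  | fjump {i : ℕ} {s : S} {b : Bool} {s' : S} (l : ℕ)
      (hu : x[i]? = some (Instr.fjump l))
      (h : Exec H x (i + l) s b s') : Exec H x i s b s'
  | bjump {i : ℕ} {s : S} {b : Bool} {s' : S} (l : ℕ)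
      (hu : x[i]? = some (Instr.bjump l)) (hl : l ≤ i)
      (h : Exec H x (i - l) s b s') : Exec H x i s b s'
  | haltT {i : ℕ} {s : S} (hu : x[i]? = some Instr.haltT) : Exec H x i s true s
  | haltF {i : ℕ} {s : S} (hu : x[i]? = some Instr.haltF) : Exec H x i s false s

/-- `M` is a derived method operation of `H`: there is an instruction sequence `x`
over `I(H)` whose produced partial method operation `⌈x⌉_H` is total and equals `M`. -/
def DerivedOp {S : Type*} (H : FU S) (M : S → Bool × S) : Prop :=
  ∃ x : List Instr, InstrSeqOver H.iface x ∧ ∀ s, Exec H x 0 s (M s).1 (M s).2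

/-- `H ≤ H'` : every method operation of `H` is a derived method operation of `H'`. -/
def FU.le {S : Type*} (H H' : FU S) : Prop :=
  ∀ m M, (m, M) ∈ H.carrier → DerivedOp H' M

/-- `H ≡ H'` : `H ≤ H'` and `H' ≤ H`. -/
def FU.equiv {S : Type*} (H H' : FU S) : Prop := FU.le H H' ∧ FU.le H' H

/-- A method operation on ℕ is computable if both its components are. -/
def ComputableMO (M : ℕ → Bool × ℕ) : Prop :=
  Computable (fun n => (M n).1) ∧ Computable (fun n => (M n).2)

/-- A functional unit for ℕ is computable if all its method operations are. -/
def ComputableFU (H : FU ℕ) : Prop :=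
  ∀ m M, (m, M) ∈ H.carrier → ComputableMO M

/-!
A derived method operation of `H'` is the function computed by a finite instruction sequence
whose basic steps are method operations of `H'`. Execution is the iteration of a one-step
transition function on (position, state) pairs until a termination instruction is reached; when
the method operations are computable, so is that transition function, and its iteration is
partial recursive (`Partrec.fix`). A derived method operation is total, hence computable.
-/

section Execution

variable {S : Type*}

/-- A backward jump past the start, like a position outside the sequence in `execStep`, is
modelled by staying in place forever. -/
def Instr.step (op : ℕ → S → Bool × S) (i : ℕ) : Instr → S → (Bool × S) ⊕ (ℕ × S)
  | .basic m, s => .inr (i + 1, (op m s).2)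
  | .postest m, s => .inr (bif (op m s).1 then i + 1 else i + 2, (op m s).2)
  | .negtest m, s => .inr (bif (op m s).1 then i + 2 else i + 1, (op m s).2)
  | .fjump l, s => .inr (i + l, s)
  | .bjump l, s => .inr (if l ≤ i then i - l else i, s)
  | .haltT, s => .inl (true, s)
  | .haltF, s => .inl (false, s)

def execStep (x : List Instr) (op : ℕ → S → Bool × S) (p : ℕ × S) : (Bool × S) ⊕ (ℕ × S) :=
  match x[p.1]? with
  | some u => u.step op p.1 p.2
  | none => .inr p

theorem execStep_of_getElem? {x : List Instr} {op : ℕ → S → Bool × S} {i : ℕ} {u : Instr}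
    (hu : x[i]? = some u) (s : S) : execStep x op (i, s) = u.step op i s := by
  simp only [execStep, hu]

theorem Exec.mem_fix_execStep {H : FU S} {x : List Instr} {i : ℕ} {s : S} {b : Bool} {s' : S}
    (h : Exec H x i s b s') : (b, s') ∈ PFun.fix (PFun.lift (execStep x H.op)) (i, s) := by
  induction h with
  | haltT hu | haltF hu =>
    exact PFun.mem_fix_iff.mpr (.inl (by simp [execStep_of_getElem? hu, Instr.step]))
  | basic _ hu _ ih | fjump _ hu _ ih =>
    exact PFun.mem_fix_iff.mpr (.inr ⟨_, by simp [execStep_of_getElem? hu, Instr.step], ih⟩)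
  | posT _ hu hr _ ih | posF _ hu hr _ ih | negT _ hu hr _ ih | negF _ hu hr _ ih =>
    exact PFun.mem_fix_iff.mpr
      (.inr ⟨_, by simp [execStep_of_getElem? hu, Instr.step, hr], ih⟩)
  | bjump _ hu hl _ ih =>
    exact PFun.mem_fix_iff.mpr (.inr ⟨_, by simp [execStep_of_getElem? hu, Instr.step, hl], ih⟩)

theorem FU.op_eq_of_mem {H : FU S} {m : ℕ} {M : S → Bool × S} (h : (m, M) ∈ H.carrier) :
    H.op m = M := by
  have hex : ∃ M, (m, M) ∈ H.carrier := ⟨M, h⟩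
  funext s
  rw [FU.op, dif_pos hex, H.functional hex.choose_spec h]

end Execution

section Computability

variable {α β S : Type*} [Primcodable α] [Primcodable β] [Primcodable S]

theorem Computable.ite_lt {n : ℕ} {g : ℕ → α → β} {d : ℕ × α → β}
    (hg : ∀ i < n, Computable (g i)) (hd : Computable d) :
    Computable fun p : ℕ × α => if p.1 < n then g p.1 p.2 else d p := by
  induction n with
  | zero => simpa using hd
  | succ n ih =>
    have hsplit : (fun p : ℕ × α => if p.1 < n + 1 then g p.1 p.2 else d p) =
        fun p => bif decide (p.1 = n) then g n p.2 else if p.1 < n then g p.1 p.2 else d p := by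
      funext p
      rcases lt_trichotomy p.1 n with hp | hp | hp
      · simp [hp, hp.ne, Nat.lt_succ_of_lt hp]
      · simp [hp]
      · simp [hp.ne', hp.not_gt, Nat.not_lt.mpr (Nat.succ_le_of_lt hp)]
    rw [hsplit]
    exact Computable.cond (Primrec.eq.comp Primrec.fst (Primrec.const n)).decide.to_comp
      ((hg n n.lt_succ_self).comp Computable.snd) (ih fun i hi => hg i (Nat.lt_succ_of_lt hi))

theorem Instr.computable_step {op : ℕ → S → Bool × S} {I : Set ℕ}
    (hop : ∀ m ∈ I, Computable (op m)) (i : ℕ) {u : Instr} (hu : u.namesIn I) :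
    Computable (u.step op i) := by
  cases u with
  | basic m =>
    exact Computable.sumInr.comp ((Computable.const _).pair (Computable.snd.comp (hop m hu)))
  | postest m | negtest m =>
    exact Computable.sumInr.comp <|
      (Computable.cond (Computable.fst.comp (hop m hu)) (Computable.const _)
        (Computable.const _)).pair (Computable.snd.comp (hop m hu))
  | fjump l | bjump l => exact Computable.sumInr.comp ((Computable.const _).pair Computable.id)
  | haltT | haltF => exact Computable.sumInl.comp ((Computable.const _).pair Computable.id)

theorem computable_execStep {op : ℕ → S → Bool × S} {I : Set ℕ}
    (hop : ∀ m ∈ I, Computable (op m)) {x : List Instr} (hx : ∀ u ∈ x, u.namesIn I) :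
    Computable (execStep x op) := by
  have hcases : execStep x op =
      fun p => if p.1 < x.length then execStep x op (p.1, p.2) else Sum.inr p := by
    funext p
    split_ifs with hp
    · rfl
    · simp [execStep, List.getElem?_eq_none (Nat.not_lt.mp hp)]
  rw [hcases]
  refine Computable.ite_lt (g := fun i s => execStep x op (i, s)) (fun i hi => ?_)
    Computable.sumInr
  have hu : x[i]? = some x[i] := List.getElem?_eq_getElem hi
  simpa only [execStep_of_getElem? hu] using
    Instr.computable_step hop i (hx _ (List.getElem_mem hi))

theorem DerivedOp.computable {H : FU S} {M : S → Bool × S} (hM : DerivedOp H M)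
    (hop : ∀ m ∈ H.iface, Computable (H.op m)) : Computable M := by
  obtain ⟨x, hx, hexec⟩ := hM
  have hrun : Partrec fun s => PFun.fix (PFun.lift (execStep x H.op)) (0, s) :=
    (Partrec.fix (computable_execStep hop hx.2).partrec).comp
      ((Computable.const 0).pair Computable.id)
  exact hrun.of_eq fun s => Part.eq_some_iff.mpr (hexec s).mem_fix_execStep

end Computability

theorem computableMO_iff {M : ℕ → Bool × ℕ} : ComputableMO M ↔ Computable M :=
  ⟨fun h => h.1.pair h.2, fun h => ⟨Computable.fst.comp h, Computable.snd.comp h⟩⟩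

theorem ComputableFU.computable_op {H : FU ℕ} (h : ComputableFU H) {m : ℕ}
    (hm : m ∈ H.iface) : Computable (H.op m) := by
  obtain ⟨M, hM⟩ := hm
  rw [FU.op_eq_of_mem hM]
  exact computableMO_iff.mp (h m M hM)

/-- If `H ≤ H'` and `H'` is computable, then `H` is computable. -/
theorem computable_of_le (H H' : FU ℕ) (hle : FU.le H H')
    (h : ComputableFU H') : ComputableFU H :=
  fun m M hM => computableMO_iff.mpr <| (hle m M hM).computable fun _ => h.computable_op
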